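/- arXiv:1803.11039 — 3 statements merged into one kernel-verified Lean document; each statement's English description precedes it below -/
import Mathlib

section
/- There exists a constant C_H > 0, depending only on H, σ and λ, such that |r(t) − r(s)| ≤ C_H |t − s|^{2H} for all s, t ∈ [0, ∞); that is, the stationary fractional Ornstein–Uhlenbeck covariance function r is 2H-Hölder continuous on [0, ∞). -/
open MeasureTheory Set

lemma abs_cos_sub_cos_le (a b : ℝ) : |Real.cos a - Real.cos b| ≤ |a - b| := by
  rw [Real.cos_sub_cos]
  rw [abs_mul, abs_mul, abs_neg]
  calc |(2:ℝ)| * |Real.sin ((a+b)/2)| * |Real.sin ((a-b)/2)|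
      ≤ 2 * 1 * |(a-b)/2| := by
        apply mul_le_mul (by rw [abs_two]; exact mul_le_mul_of_nonneg_left (Real.abs_sin_le_one _) (by norm_num)) (Real.abs_sin_le_abs) (abs_nonneg _) (by norm_num)
    _ = |a - b| := by rw [abs_div, abs_two]; ring

lemma abs_cos_sub_cos_le_two (a b : ℝ) : |Real.cos a - Real.cos b| ≤ 2 := by
  calc |Real.cos a - Real.cos b| ≤ |Real.cos a| + |Real.cos b| := abs_sub _ _
    _ ≤ 1 + 1 := add_le_add (Real.abs_cos_le_one a) (Real.abs_cos_le_one b)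
    _ = 2 := by norm_num

lemma g_integrable {H : ℝ} (hH : H ∈ Set.Ioo (0:ℝ) (1/2)) :
    IntegrableOn (fun x : ℝ => x ^ (1 - 2*H) / (1 + x ^ 2)) (Ioi 0) := by
  obtain ⟨h0, h1⟩ := hH
  have hmeas : Measurable (fun x : ℝ => x ^ (1 - 2*H) / (1 + x ^ 2)) := by fun_prop
  have hIoc : IntegrableOn (fun x : ℝ => x ^ (1 - 2*H) / (1 + x ^ 2)) (Ioc 0 1) := by
    have hmaj : IntegrableOn (fun x : ℝ => x ^ (1 - 2*H)) (Ioc 0 1) := by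
      have := (intervalIntegral.intervalIntegrable_rpow' (a := 0) (b := 1) (r := 1 - 2*H) (by linarith))
      rw [intervalIntegrable_iff_integrableOn_Ioc_of_le (by norm_num)] at this
      exact this
    apply Integrable.mono hmaj (hmeas.aestronglyMeasurable.restrict)
    filter_upwards [ae_restrict_mem measurableSet_Ioc] with x hx
    rw [Real.norm_eq_abs, Real.norm_eq_abs,
      abs_of_nonneg (div_nonneg (Real.rpow_nonneg hx.1.le _) (by positivity)),
      abs_of_nonneg (Real.rpow_nonneg hx.1.le _)]
    exact div_le_self (Real.rpow_nonneg hx.1.le _) (by nlinarith [sq_nonneg x])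
  have hIoi : IntegrableOn (fun x : ℝ => x ^ (1 - 2*H) / (1 + x ^ 2)) (Ioi 1) := by
    have hmaj : IntegrableOn (fun x : ℝ => x ^ (-1 - 2*H)) (Ioi 1) :=
      integrableOn_Ioi_rpow_of_lt (by linarith) one_pos
    apply Integrable.mono hmaj (hmeas.aestronglyMeasurable.restrict)
    filter_upwards [ae_restrict_mem measurableSet_Ioi] with x hx
    have hx0 : (0:ℝ) < x := lt_trans one_pos hx
    rw [Real.norm_eq_abs, Real.norm_eq_abs,
      abs_of_nonneg (div_nonneg (Real.rpow_nonneg hx0.le _) (by positivity)),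
      abs_of_nonneg (Real.rpow_nonneg hx0.le _)]
    rw [div_le_iff₀ (by positivity)]
    calc x ^ (1 - 2*H) = x ^ (-1 - 2*H) * x ^ (2:ℝ) := by
          rw [← Real.rpow_add hx0]; congr 1; ring
      _ ≤ x ^ (-1 - 2*H) * (1 + x ^ 2) := by
          apply mul_le_mul_of_nonneg_left _ (Real.rpow_nonneg hx0.le _)
          rw [Real.rpow_two]; nlinarith
  rw [show Ioi (0:ℝ) = Ioc 0 1 ∪ Ioi 1 from (Ioc_union_Ioi_eq_Ioi zero_le_one).symm]
  exact hIoc.union hIoi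

lemma cosg_integrable {H : ℝ} (hH : H ∈ Set.Ioo (0:ℝ) (1/2)) (c : ℝ) :
    IntegrableOn (fun x : ℝ => Real.cos (c * x) * (x ^ (1 - 2*H) / (1 + x ^ 2))) (Ioi 0) := by
  apply Integrable.mono (g_integrable hH)
  · exact ((by fun_prop : Measurable (fun x : ℝ => Real.cos (c * x) * (x ^ (1 - 2*H) / (1 + x ^ 2)))).aestronglyMeasurable.restrict)
  · filter_upwards [ae_restrict_mem measurableSet_Ioi] with x hx
    rw [Real.norm_eq_abs, Real.norm_eq_abs, abs_mul]
    have hg : (0:ℝ) ≤ x ^ (1 - 2*H) / (1 + x^2) := by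
      apply div_nonneg (Real.rpow_nonneg (le_of_lt hx) _) (by positivity)
    rw [abs_of_nonneg hg]
    calc |Real.cos (c*x)| * (x ^ (1 - 2*H) / (1 + x^2)) ≤ 1 * (x ^ (1 - 2*H) / (1 + x^2)) :=
          mul_le_mul_of_nonneg_right (Real.abs_cos_le_one _) hg
      _ = _ := one_mul _

lemma key_bound {H : ℝ} (hH : H ∈ Set.Ioo (0:ℝ) (1/2)) {b c : ℝ} (hbc : b ≠ c) :
    |∫ x in Ioi (0:ℝ), (Real.cos (b*x) - Real.cos (c*x)) * (x ^ (1 - 2*H) / (1 + x ^ 2))| ≤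
      (1/(1-2*H) + 1/H) * |b - c| ^ (2*H) := by
  obtain ⟨h0, h1⟩ := hH
  set u : ℝ := |b - c| with hu
  have hu0 : 0 < u := abs_pos.mpr (sub_ne_zero.mpr hbc)
  set a : ℝ := u⁻¹ with ha
  have ha0 : 0 < a := inv_pos.mpr hu0
  -- integrand and its integrability
  set f : ℝ → ℝ := fun x => (Real.cos (b*x) - Real.cos (c*x)) * (x ^ (1 - 2*H) / (1 + x ^ 2)) with hf
  have hfint : IntegrableOn f (Ioi 0) := by
    have h2 := (cosg_integrable ⟨h0, h1⟩ b).sub (cosg_integrable ⟨h0, h1⟩ c)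
    exact MeasureTheory.IntegrableOn.congr_fun h2
      (fun x _ => by simp only [hf, Pi.sub_apply]; ring) measurableSet_Ioi
  -- |∫ f| ≤ ∫ |f|
  have step1 : |∫ x in Ioi (0:ℝ), f x| ≤ ∫ x in Ioi (0:ℝ), |f x| := by
    simpa [Real.norm_eq_abs] using norm_integral_le_integral_norm (μ := volume.restrict (Ioi 0)) f
  have habsint : IntegrableOn (fun x => |f x|) (Ioi 0) := hfint.abs
  -- split the integral
  have hsplit : ∫ x in Ioi (0:ℝ), |f x| =
      (∫ x in Ioc (0:ℝ) a, |f x|) + ∫ x in Ioi a, |f x| := by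
    rw [← setIntegral_union (Ioc_disjoint_Ioi le_rfl) measurableSet_Ioi
      (habsint.mono_set (by rw [← Ioc_union_Ioi_eq_Ioi ha0.le]; exact subset_union_left))
      (habsint.mono_set (by rw [← Ioc_union_Ioi_eq_Ioi ha0.le]; exact subset_union_right)),
      Ioc_union_Ioi_eq_Ioi ha0.le]
  -- bound on (0, a]
  have hbound1 : (∫ x in Ioc (0:ℝ) a, |f x|) ≤ ∫ x in Ioc (0:ℝ) a, u * x ^ (-(2*H)) := by
    apply setIntegral_mono_on
      (habsint.mono_set (by rw [← Ioc_union_Ioi_eq_Ioi ha0.le]; exact subset_union_left))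
    · apply Integrable.const_mul
      have := (intervalIntegral.intervalIntegrable_rpow' (a := 0) (b := a) (r := -(2*H)) (by linarith))
      rw [intervalIntegrable_iff_integrableOn_Ioc_of_le ha0.le] at this
      exact this
    · exact measurableSet_Ioc
    · intro x hx
      have hx0 : (0:ℝ) < x := hx.1
      have hg : (0:ℝ) ≤ x ^ (1 - 2*H) / (1 + x^2) := div_nonneg (Real.rpow_nonneg hx0.le _) (by positivity)
      rw [hf, abs_mul, abs_of_nonneg hg]
      calc |Real.cos (b*x) - Real.cos (c*x)| * (x ^ (1 - 2*H) / (1 + x^2))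
          ≤ (u * x) * (x ^ (1 - 2*H) / x ^ (2:ℝ)) := by
            apply mul_le_mul
            · calc |Real.cos (b*x) - Real.cos (c*x)| ≤ |b*x - c*x| := abs_cos_sub_cos_le _ _
                _ = u * x := by rw [← sub_mul, abs_mul, abs_of_pos hx0]
            · apply div_le_div_of_nonneg_left (Real.rpow_nonneg hx0.le _) (by positivity)
              rw [Real.rpow_two]; nlinarith [sq_nonneg x]
            · exact hg
            · positivity
        _ = u * x ^ (-(2*H)) := by
            rw [← Real.rpow_sub hx0, mul_assoc]
            congr 1
            rw [show x * x ^ (1 - 2*H - 2) = x ^ (1:ℝ) * x ^ (1 - 2*H - 2) by rw [Real.rpow_one],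
              ← Real.rpow_add hx0]
            congr 1; ring
  -- bound on (a, ∞)
  have hbound2 : (∫ x in Ioi a, |f x|) ≤ ∫ x in Ioi a, 2 * x ^ (-1 - 2*H) := by
    apply setIntegral_mono_on
      (habsint.mono_set (by rw [← Ioc_union_Ioi_eq_Ioi ha0.le]; exact subset_union_right))
    · exact (integrableOn_Ioi_rpow_of_lt (by linarith) ha0).const_mul 2
    · exact measurableSet_Ioi
    · intro x hx
      have hx0 : (0:ℝ) < x := lt_trans ha0 hx
      have hg : (0:ℝ) ≤ x ^ (1 - 2*H) / (1 + x^2) := div_nonneg (Real.rpow_nonneg hx0.le _) (by positivity)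
      rw [hf, abs_mul, abs_of_nonneg hg]
      calc |Real.cos (b*x) - Real.cos (c*x)| * (x ^ (1 - 2*H) / (1 + x^2))
          ≤ 2 * (x ^ (1 - 2*H) / x ^ (2:ℝ)) := by
            apply mul_le_mul (abs_cos_sub_cos_le_two _ _)
            · apply div_le_div_of_nonneg_left (Real.rpow_nonneg hx0.le _) (by positivity)
              rw [Real.rpow_two]; nlinarith [sq_nonneg x]
            · exact hg
            · norm_num
        _ = 2 * x ^ (-1 - 2*H) := by
            rw [← Real.rpow_sub hx0]
            rw [show (1:ℝ) - 2*H - 2 = -1 - 2*H by ring]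
  -- compute the two majorant integrals
  have hcomp1 : (∫ x in Ioc (0:ℝ) a, u * x ^ (-(2*H))) = u ^ (2*H) / (1 - 2*H) := by
    rw [MeasureTheory.integral_const_mul, ← intervalIntegral.integral_of_le ha0.le,
      integral_rpow (Or.inl (by linarith)),
      Real.zero_rpow (by linarith : -(2*H) + 1 ≠ 0), sub_zero, ha,
      ← Real.rpow_neg_one u, ← Real.rpow_mul hu0.le,
      show (-1:ℝ) * (-(2*H) + 1) = (2*H - 1) by ring,
      show (2:ℝ)*H = (2*H - 1) + 1 by ring, Real.rpow_add hu0, Real.rpow_one]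
    field_simp
    ring
  have hcomp2 : (∫ x in Ioi a, 2 * x ^ (-1 - 2*H)) = u ^ (2*H) / H := by
    rw [MeasureTheory.integral_const_mul, integral_Ioi_rpow_of_lt (by linarith) ha0]
    rw [show (-1:ℝ) - 2*H + 1 = -(2*H) by ring]
    rw [ha, ← Real.rpow_neg_one u, ← Real.rpow_mul hu0.le]
    rw [show (-1:ℝ) * -(2*H) = 2*H by ring]
    field_simp
  calc |∫ x in Ioi (0:ℝ), f x| ≤ ∫ x in Ioi (0:ℝ), |f x| := step1
    _ = (∫ x in Ioc (0:ℝ) a, |f x|) + ∫ x in Ioi a, |f x| := hsplit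
    _ ≤ u ^ (2*H) / (1 - 2*H) + u ^ (2*H) / H := by
        rw [← hcomp1, ← hcomp2]; exact add_le_add hbound1 hbound2
    _ = (1/(1-2*H) + 1/H) * u ^ (2*H) := by ring

/-- Covariance function of the one-dimensional stationary fractional
Ornstein–Uhlenbeck process with Hurst parameter `H`, volatility `σ` and drift `lam`. -/
noncomputable def fouCov (H σ lam : ℝ) (t : ℝ) : ℝ :=
  (σ ^ 2 / lam ^ (2 * H)) * (Real.Gamma (2 * H + 1) * Real.sin (Real.pi * H) / Real.pi) *
    ∫ x in Set.Ioi (0 : ℝ), Real.cos (lam * t * x) * x ^ (1 - 2 * H) / (1 + x ^ 2)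

/-- The covariance function `r` of the stationary fOU process is `2H`-Hölder continuous
on `[0, ∞)`: there is a constant `C_H > 0`, depending only on `H`, `σ`, `lam`, with
`|r t − r s| ≤ C_H |t − s| ^ (2H)` for all `s, t ≥ 0`. -/
theorem stmt0 (H σ lam : ℝ) (hH : H ∈ Set.Ioo (0 : ℝ) (1 / 2)) (hσ : 0 < σ) (hlam : 0 < lam) :
    ∃ C > (0 : ℝ), ∀ s ∈ Set.Ici (0 : ℝ), ∀ t ∈ Set.Ici (0 : ℝ),
      |fouCov H σ lam t - fouCov H σ lam s| ≤ C * |t - s| ^ (2 * H) := by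
  obtain ⟨h0, h1⟩ := hH
  set K : ℝ := (σ ^ 2 / lam ^ (2 * H)) * (Real.Gamma (2 * H + 1) * Real.sin (Real.pi * H) / Real.pi)
    with hKdef
  have hK : 0 < K := by
    apply mul_pos
    · exact div_pos (pow_pos hσ 2) (Real.rpow_pos_of_pos hlam _)
    · apply div_pos _ Real.pi_pos
      apply mul_pos (Real.Gamma_pos_of_pos (by linarith))
      apply Real.sin_pos_of_pos_of_lt_pi (by positivity)
      calc Real.pi * H < Real.pi * 1 := by
            apply mul_lt_mul_of_pos_left (by linarith) Real.pi_pos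
        _ = Real.pi := mul_one _
  set C0 : ℝ := 1/(1-2*H) + 1/H with hC0def
  have hC0 : 0 < C0 := by
    apply add_pos <;> apply div_pos one_pos <;> linarith
  refine ⟨K * C0 * lam ^ (2*H), by positivity, fun s _ t _ => ?_⟩
  by_cases hts : t = s
  · subst hts
    simp [Real.zero_rpow (by linarith : 2*H ≠ 0)]
  · have hbc : lam * t ≠ lam * s := fun h => hts (mul_left_cancel₀ hlam.ne' h)
    have hdiff : fouCov H σ lam t - fouCov H σ lam s =
        K * ∫ x in Ioi (0:ℝ),
          (Real.cos (lam*t*x) - Real.cos (lam*s*x)) * (x ^ (1 - 2*H) / (1 + x ^ 2)) := by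
      rw [fouCov, fouCov, ← hKdef, ← mul_sub]
      congr 1
      rw [← integral_sub]
      · congr 1; funext x; ring
      · have := cosg_integrable ⟨h0, h1⟩ (lam*t)
        exact this.congr_fun (fun x _ => by ring) measurableSet_Ioi
      · have := cosg_integrable ⟨h0, h1⟩ (lam*s)
        exact this.congr_fun (fun x _ => by ring) measurableSet_Ioi
    rw [hdiff, abs_mul, abs_of_pos hK]
    calc K * |∫ x in Ioi (0:ℝ),
          (Real.cos (lam*t*x) - Real.cos (lam*s*x)) * (x ^ (1 - 2*H) / (1 + x ^ 2))|
        ≤ K * (C0 * |lam*t - lam*s| ^ (2*H)) := by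
          apply mul_le_mul_of_nonneg_left _ hK.le
          exact key_bound ⟨h0, h1⟩ hbc
      _ = K * C0 * lam ^ (2*H) * |t - s| ^ (2*H) := by
          rw [show lam*t - lam*s = lam*(t-s) by ring, abs_mul, abs_of_pos hlam,
            Real.mul_rpow hlam.le (abs_nonneg _)]
          ring
end

section
/- There exists a constant C_H > 0, depending only on H, σ and λ, such that E|X_t − X_s|² ≤ C_H |t − s|^{2H} for all s, t ≥ 0; equivalently, 2(r(0) − r(|t − s|)) ≤ C_H |t − s|^{2H}. -/
open MeasureTheory Set

private lemma contOn_rpow (p : ℝ) : ContinuousOn (fun x : ℝ => x ^ p) (Ioi 0) :=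
  fun x hx => (Real.continuousAt_rpow_const x p (Or.inl (ne_of_gt hx))).continuousWithinAt

private lemma rpow_split {x : ℝ} (hx : 0 < x) (H : ℝ) :
    x ^ (1 - 2*H) / x ^ 2 = x ^ (-1 - 2*H) := by
  rw [show (x:ℝ)^2 = x ^ (2:ℝ) by rw [← Real.rpow_natCast x 2]; norm_num,
    ← Real.rpow_sub hx]
  congr 1; ring

private lemma kernel_int {H : ℝ} (h1 : 0 < H) (h2 : H < 1/2) :
    IntegrableOn (fun x : ℝ => x ^ (1 - 2*H) / (1 + x ^ 2)) (Ioi 0) := by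
  have hc : ContinuousOn (fun x : ℝ => x ^ (1 - 2*H) / (1 + x ^ 2)) (Ioi 0) := by
    refine (contOn_rpow _).div (by fun_prop) (fun x _ => by positivity)
  rw [← Ioc_union_Ioi_eq_Ioi (zero_le_one (α := ℝ))]
  refine IntegrableOn.union ?_ ?_
  · refine Integrable.mono' ((intervalIntegral.intervalIntegrable_rpow'
      (r := 1 - 2*H) (by linarith)).1) ((hc.mono Ioc_subset_Ioi_self).aestronglyMeasurable
      measurableSet_Ioc) ?_
    refine (ae_restrict_iff' measurableSet_Ioc).2 (ae_of_all _ fun x hx => ?_)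
    have hx0 : (0:ℝ) < x := hx.1
    have h1x : (1:ℝ) ≤ 1 + x^2 := by nlinarith
    have hnum : (0:ℝ) ≤ x ^ (1-2*H) := Real.rpow_nonneg hx0.le _
    rw [Real.norm_eq_abs, abs_of_nonneg (by positivity)]
    exact div_le_self hnum h1x
  · refine Integrable.mono' (integrableOn_Ioi_rpow_of_lt (a := -1-2*H) (by linarith) one_pos)
      ((hc.mono (Ioi_subset_Ioi zero_le_one)).aestronglyMeasurable measurableSet_Ioi) ?_
    refine (ae_restrict_iff' measurableSet_Ioi).2 (ae_of_all _ fun x hx => ?_)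
    have hx0 : (0:ℝ) < x := lt_trans one_pos hx
    have hnum : (0:ℝ) ≤ x ^ (1-2*H) := Real.rpow_nonneg hx0.le _
    rw [Real.norm_eq_abs, abs_of_nonneg (by positivity), ← rpow_split hx0]
    exact div_le_div_of_nonneg_left hnum (by positivity) (by nlinarith)

private lemma cos_kernel_int {H : ℝ} (h1 : 0 < H) (h2 : H < 1/2) (a : ℝ) :
    IntegrableOn (fun x : ℝ => Real.cos (a * x) * x ^ (1 - 2*H) / (1 + x ^ 2)) (Ioi 0) := by
  refine Integrable.mono' (kernel_int h1 h2) ?_ ?_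
  · refine ContinuousOn.aestronglyMeasurable ?_ measurableSet_Ioi
    exact (((Real.continuous_cos.comp (continuous_const.mul continuous_id)).continuousOn).mul
      (contOn_rpow _)).div (by fun_prop) (fun x _ => by positivity)
  · refine (ae_restrict_iff' measurableSet_Ioi).2 (ae_of_all _ fun x hx => ?_)
    have hx0 : (0:ℝ) < x := hx
    have hnum : (0:ℝ) ≤ x ^ (1-2*H) := Real.rpow_nonneg hx0.le _
    have h1x : (0:ℝ) < 1 + x^2 := by positivity
    rw [Real.norm_eq_abs, abs_div, abs_mul, abs_of_nonneg hnum, abs_of_pos h1x]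
    have : |Real.cos (a*x)| * x ^ (1-2*H) ≤ 1 * x ^ (1-2*H) :=
      mul_le_mul_of_nonneg_right (Real.abs_cos_le_one _) hnum
    calc |Real.cos (a*x)| * x ^ (1-2*H) / (1 + x^2)
        ≤ 1 * x ^ (1-2*H) / (1 + x^2) := by gcongr
      _ = x ^ (1-2*H) / (1+x^2) := by ring

private lemma g_int {H : ℝ} (h1 : 0 < H) (h2 : H < 1/2) :
    IntegrableOn (fun y : ℝ => (1 - Real.cos y) * y ^ (-1 - 2*H)) (Ioi 0) := by
  have hc : ContinuousOn (fun y : ℝ => (1 - Real.cos y) * y ^ (-1 - 2*H)) (Ioi 0) :=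
    ((continuous_const.sub Real.continuous_cos).continuousOn).mul (contOn_rpow _)
  rw [← Ioc_union_Ioi_eq_Ioi (zero_le_one (α := ℝ))]
  refine IntegrableOn.union ?_ ?_
  · refine Integrable.mono' (((intervalIntegral.intervalIntegrable_rpow'
      (r := 1 - 2*H) (by linarith)).1).div_const 2) ((hc.mono Ioc_subset_Ioi_self).aestronglyMeasurable
      measurableSet_Ioc) ?_
    refine (ae_restrict_iff' measurableSet_Ioc).2 (ae_of_all _ fun y hy => ?_)
    have hy0 : (0:ℝ) < y := hy.1
    have hcos : 0 ≤ 1 - Real.cos y := by linarith [Real.cos_le_one y]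
    have hq : (0:ℝ) ≤ y ^ (-1-2*H) := Real.rpow_nonneg hy0.le _
    have hb : 1 - Real.cos y ≤ y^2/2 := by linarith [Real.one_sub_sq_div_two_le_cos (x := y)]
    rw [Real.norm_eq_abs, abs_of_nonneg (mul_nonneg hcos hq)]
    have : (1 - Real.cos y) * y ^ (-1-2*H) ≤ (y^2/2) * y ^ (-1-2*H) :=
      mul_le_mul_of_nonneg_right hb hq
    refine this.trans (le_of_eq ?_)
    rw [show (y:ℝ)^2 = y ^ (2:ℝ) by rw [← Real.rpow_natCast y 2]; norm_num]
    rw [div_mul_eq_mul_div, ← Real.rpow_add hy0]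
    congr 2; ring
  · refine Integrable.mono' ((integrableOn_Ioi_rpow_of_lt (a := -1-2*H) (by linarith)
      one_pos).const_mul 2) ((hc.mono (Ioi_subset_Ioi zero_le_one)).aestronglyMeasurable
      measurableSet_Ioi) ?_
    refine (ae_restrict_iff' measurableSet_Ioi).2 (ae_of_all _ fun y hy => ?_)
    have hy0 : (0:ℝ) < y := lt_trans one_pos hy
    have hcos : 0 ≤ 1 - Real.cos y := by linarith [Real.cos_le_one y]
    have hq : (0:ℝ) ≤ y ^ (-1-2*H) := Real.rpow_nonneg hy0.le _
    rw [Real.norm_eq_abs, abs_of_nonneg (mul_nonneg hcos hq)]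
    exact mul_le_mul_of_nonneg_right (by linarith [Real.neg_one_le_cos y]) hq

private lemma scaled_eq {H : ℝ} (h1 : 0 < H) (h2 : H < 1/2) {a : ℝ} (ha : 0 < a) :
    IntegrableOn (fun x : ℝ => (1 - Real.cos (a * x)) * x ^ (-1 - 2*H)) (Ioi 0) ∧
    ∫ x in Ioi (0:ℝ), (1 - Real.cos (a * x)) * x ^ (-1 - 2*H)
      = a ^ (2*H) * ∫ y in Ioi (0:ℝ), (1 - Real.cos y) * y ^ (-1 - 2*H) := by
  set g : ℝ → ℝ := fun y => (1 - Real.cos y) * y ^ (-1 - 2*H) with hg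
  have hcomp : IntegrableOn (fun x => g (a * x)) (Ioi 0) := by
    refine (integrableOn_Ioi_comp_mul_left_iff g 0 ha).2 ?_
    rw [mul_zero]; exact g_int h1 h2
  have heq : EqOn (fun x : ℝ => (1 - Real.cos (a * x)) * x ^ (-1 - 2*H))
      (fun x => a ^ (1 + 2*H) * g (a * x)) (Ioi 0) := by
    intro x hx
    have hx0 : (0:ℝ) < x := hx
    simp only [hg]
    rw [Real.mul_rpow ha.le hx0.le]
    rw [show a ^ (1 + 2*H) * ((1 - Real.cos (a*x)) * (a ^ (-1-2*H) * x ^ (-1-2*H)))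
        = (a ^ (1 + 2*H) * a ^ (-1-2*H)) * ((1 - Real.cos (a*x)) * x ^ (-1-2*H)) by ring,
      ← Real.rpow_add ha]
    norm_num
  constructor
  · exact (IntegrableOn.congr_fun (hcomp.const_mul _) heq.symm measurableSet_Ioi)
  · rw [setIntegral_congr_fun measurableSet_Ioi heq, integral_const_mul,
      MeasureTheory.integral_comp_mul_left_Ioi g 0 ha, mul_zero, smul_eq_mul,
      ← mul_assoc]
    congr 1
    rw [show (a:ℝ)⁻¹ = a ^ (-1:ℝ) by rw [Real.rpow_neg_one], ← Real.rpow_add ha]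
    congr 1; ring

private lemma cov_int_bound {H : ℝ} (h1 : 0 < H) (h2 : H < 1/2) {a : ℝ} (ha : 0 ≤ a) :
    (∫ x in Ioi (0:ℝ), x ^ (1 - 2*H) / (1 + x ^ 2))
      - (∫ x in Ioi (0:ℝ), Real.cos (a * x) * x ^ (1 - 2*H) / (1 + x ^ 2))
    ≤ (∫ y in Ioi (0:ℝ), (1 - Real.cos y) * y ^ (-1 - 2*H)) * a ^ (2*H) := by
  rcases eq_or_lt_of_le ha with rfl | ha'
  · have : ∀ x : ℝ, Real.cos (0 * x) * x ^ (1-2*H) / (1+x^2) = x ^ (1-2*H) / (1+x^2) := by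
      intro x; simp
    rw [funext this] -- careful
    rw [sub_self, Real.zero_rpow (by positivity : (2*H) ≠ 0), mul_zero]
  · have hkey := scaled_eq h1 h2 ha'
    have hsub : (∫ x in Ioi (0:ℝ), x ^ (1 - 2*H) / (1 + x ^ 2))
        - (∫ x in Ioi (0:ℝ), Real.cos (a * x) * x ^ (1 - 2*H) / (1 + x ^ 2))
        = ∫ x in Ioi (0:ℝ), (x ^ (1 - 2*H) / (1 + x ^ 2)
            - Real.cos (a * x) * x ^ (1 - 2*H) / (1 + x ^ 2)) :=
      (integral_sub (kernel_int h1 h2) (cos_kernel_int h1 h2 a)).symm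
    rw [hsub]
    have hmono : ∫ x in Ioi (0:ℝ), (x ^ (1 - 2*H) / (1 + x ^ 2)
          - Real.cos (a * x) * x ^ (1 - 2*H) / (1 + x ^ 2))
        ≤ ∫ x in Ioi (0:ℝ), (1 - Real.cos (a * x)) * x ^ (-1 - 2*H) := by
      refine setIntegral_mono_on ((kernel_int h1 h2).sub (cos_kernel_int h1 h2 a))
        hkey.1 measurableSet_Ioi ?_
      intro x hx
      have hx0 : (0:ℝ) < x := hx
      have hcos : 0 ≤ 1 - Real.cos (a*x) := by linarith [Real.cos_le_one (a*x)]
      have hker : x ^ (1-2*H) / (1+x^2) ≤ x ^ (-1-2*H) := by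
        rw [← rpow_split hx0]
        exact div_le_div_of_nonneg_left (Real.rpow_nonneg hx0.le _) (by positivity)
          (by nlinarith)
      calc x ^ (1-2*H) / (1+x^2) - Real.cos (a*x) * x ^ (1-2*H) / (1+x^2)
          = (1 - Real.cos (a*x)) * (x ^ (1-2*H) / (1+x^2)) := by ring
        _ ≤ (1 - Real.cos (a*x)) * x ^ (-1-2*H) := by
            exact mul_le_mul_of_nonneg_left hker hcos
    exact hmono.trans (le_of_eq (by rw [hkey.2]; ring))

/-- There is a constant `C_H > 0`, depending only on `H`, `σ`, `lam`, such that
`E|X_t − X_s|² ≤ C_H |t−s|^{2H}` for all `s, t ≥ 0`; equivalently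
`2(r(0) − r(|t−s|)) ≤ C_H |t−s|^{2H}`. -/
theorem stmt4 {Ω : Type*} [MeasurableSpace Ω] (P : Measure Ω) [IsProbabilityMeasure P]
    (H σ lam : ℝ) (hH : H ∈ Set.Ioo (0 : ℝ) (1 / 2)) (hσ : 0 < σ) (hlam : 0 < lam)
    (X : ℝ → Ω → ℝ)
    (hL2 : ∀ t, 0 ≤ t → MemLp (X t) 2 P)
    (hcent : ∀ t, 0 ≤ t → ∫ ω, X t ω ∂P = 0)
    (hcov : ∀ s t, 0 ≤ s → 0 ≤ t → ∫ ω, X s ω * X t ω ∂P = fouCov H σ lam |t - s|) :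
    ∃ C > (0 : ℝ), ∀ s t : ℝ, 0 ≤ s → 0 ≤ t →
      (∫ ω, (X t ω - X s ω) ^ 2 ∂P ≤ C * |t - s| ^ (2 * H)) ∧
      (2 * (fouCov H σ lam 0 - fouCov H σ lam |t - s|) ≤ C * |t - s| ^ (2 * H)) := by
  obtain ⟨h1, h2⟩ := hH
  set c : ℝ := σ ^ 2 / lam ^ (2 * H) * (Real.Gamma (2 * H + 1) * Real.sin (Real.pi * H) / Real.pi)
    with hc
  have hcpos : 0 < c := by
    apply mul_pos
    · exact div_pos (by positivity) (Real.rpow_pos_of_pos hlam _)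
    · apply div_pos (mul_pos (Real.Gamma_pos_of_pos (by linarith))
        (Real.sin_pos_of_pos_of_lt_pi (by positivity) ?_)) Real.pi_pos
      nlinarith [Real.pi_pos]
  set K : ℝ := ∫ y in Ioi (0:ℝ), (1 - Real.cos y) * y ^ (-1 - 2*H) with hK
  have hKnn : 0 ≤ K := by
    refine setIntegral_nonneg measurableSet_Ioi fun y hy => ?_
    exact mul_nonneg (by linarith [Real.cos_le_one y])
      (Real.rpow_nonneg (le_of_lt hy) _)
  refine ⟨2 * c * K * lam ^ (2*H) + 1, by positivity, fun s t hs ht => ?_⟩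
  set u : ℝ := |t - s| with hu
  have hu0 : 0 ≤ u := abs_nonneg _
  -- the covariance bound
  have hbound : 2 * (fouCov H σ lam 0 - fouCov H σ lam u)
      ≤ (2 * c * K * lam ^ (2*H) + 1) * u ^ (2*H) := by
    have h0 : fouCov H σ lam 0 = c * ∫ x in Ioi (0:ℝ), x ^ (1 - 2*H) / (1 + x ^ 2) := by
      rw [fouCov]
      congr 1
      refine setIntegral_congr_fun measurableSet_Ioi fun x _ => ?_
      simp
    have hu' : fouCov H σ lam u
        = c * ∫ x in Ioi (0:ℝ), Real.cos (lam * u * x) * x ^ (1 - 2*H) / (1 + x ^ 2) := rfl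
    have hb := cov_int_bound h1 h2 (a := lam * u) (by positivity)
    have hrw : (lam * u) ^ (2*H) = lam ^ (2*H) * u ^ (2*H) := Real.mul_rpow hlam.le hu0
    have hunn : 0 ≤ u ^ (2*H) := Real.rpow_nonneg hu0 _
    have : fouCov H σ lam 0 - fouCov H σ lam u ≤ c * (K * (lam ^ (2*H) * u ^ (2*H))) := by
      rw [h0, hu', ← mul_sub]
      calc c * ((∫ x in Ioi (0:ℝ), x ^ (1 - 2*H) / (1 + x ^ 2))
            - ∫ x in Ioi (0:ℝ), Real.cos (lam * u * x) * x ^ (1 - 2*H) / (1 + x ^ 2))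
          ≤ c * (K * (lam * u) ^ (2*H)) := mul_le_mul_of_nonneg_left hb hcpos.le
        _ = c * (K * (lam ^ (2*H) * u ^ (2*H))) := by rw [hrw]
    nlinarith [mul_nonneg (mul_nonneg hcpos.le hKnn) (Real.rpow_nonneg hlam.le (2*H))]
  -- the moment identity
  have hmul : ∀ a b : ℝ, 0 ≤ a → 0 ≤ b → Integrable (fun ω => X a ω * X b ω) P := by
    intro a b ha hb
    have hadd : Integrable (fun ω => (X a ω + X b ω) ^ 2) P := by
      have := ((hL2 a ha).add (hL2 b hb)).integrable_sq
      simpa using this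
    have ha2 := (hL2 a ha).integrable_sq
    have hb2 := (hL2 b hb).integrable_sq
    have : (fun ω => X a ω * X b ω)
        = fun ω => ((X a ω + X b ω) ^ 2 - X a ω ^ 2 - X b ω ^ 2) / 2 := by
      funext ω; ring
    rw [this]
    exact ((hadd.sub ha2).sub hb2).div_const 2
  have e1 : ∫ ω, (X t ω - X s ω) ^ 2 ∂P = 2 * (fouCov H σ lam 0 - fouCov H σ lam u) := by
    have htt := hcov t t ht ht
    have hst := hcov s t hs ht
    have hss := hcov s s hs hs
    rw [sub_self, abs_zero] at htt hss
    have expand : (fun ω => (X t ω - X s ω) ^ 2)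
        = fun ω => (X t ω * X t ω - 2 * (X s ω * X t ω)) + X s ω * X s ω := by
      funext ω; ring
    have hA : Integrable (fun ω => X t ω * X t ω - 2 * (X s ω * X t ω)) P :=
      (hmul t t ht ht).sub ((hmul s t hs ht).const_mul 2)
    rw [expand, integral_add hA (hmul s s hs hs),
      integral_sub (hmul t t ht ht) ((hmul s t hs ht).const_mul 2),
      integral_const_mul, htt, hst, hss]
    ring
  exact ⟨by rw [e1]; exact hbound, hbound⟩
end

section
/- The process Z satisfies: (a) sup_{t ≥ 0} E[Z_t²] < ∞; (b) there exists a constant C > 0 such that E|Z_t − Z_s|² ≤ C|t − s|² for all 0 ≤ s ≤ t; and (c) (1/t) ξ Z_t → 0 almost surely as t → ∞. -/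
open MeasureTheory ProbabilityTheory Set Filter
open scoped ENNReal NNReal

/-- `Z_t = ∫₀^t λ e^{−λu} X̄_u du`, a pathwise Lebesgue integral. -/
noncomputable def zProc {Ω : Type*} (lam : ℝ) (Xbar : ℝ → Ω → ℝ) (t : ℝ) (ω : Ω) : ℝ :=
  ∫ u in (0 : ℝ)..t, lam * Real.exp (-lam * u) * Xbar u ω

section Aux

lemma aux_ennnorm_sq (x : ℝ) : (‖x‖₊ : ℝ≥0∞) ^ 2 = ENNReal.ofReal (x ^ 2) := by
  rw [← enorm_eq_nnnorm, Real.enorm_eq_ofReal_abs, ← ENNReal.ofReal_pow (abs_nonneg x), sq_abs]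

/-- Cauchy–Schwarz for lower integrals with weight `φ`. -/
lemma aux_lintegral_cs {α : Type*} [MeasurableSpace α] (μ : Measure α) (φ W : α → ℝ≥0∞)
    (hφ : Measurable φ) (hW : Measurable W) :
    (∫⁻ a, φ a * W a ∂μ) ^ 2 ≤ (∫⁻ a, φ a ∂μ) * (∫⁻ a, φ a * (W a) ^ 2 ∂μ) := by
  have hpq : Real.HolderConjugate 2 2 := Real.HolderConjugate.two_two
  have hfm : Measurable fun a => (φ a) ^ (1 / 2 : ℝ) := by measurability
  have h := ENNReal.lintegral_mul_le_Lp_mul_Lq μ hpq (g := fun a => (φ a) ^ (1 / 2 : ℝ) * W a) hfm.aemeasurable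
    (hfm.mul hW).aemeasurable
  have e1 : ∀ x : ℝ≥0∞, x ^ (1 / 2 : ℝ) * x ^ (1 / 2 : ℝ) = x := by
    intro x
    rw [← ENNReal.rpow_add_of_nonneg _ _ (by norm_num) (by norm_num)]
    norm_num
  have e2 : ∀ x : ℝ≥0∞, (x ^ (1 / 2 : ℝ)) ^ (2 : ℝ) = x := by
    intro x; rw [← ENNReal.rpow_mul]; norm_num
  have hL : ∫⁻ a, ((fun a => (φ a) ^ (1 / 2 : ℝ)) * fun a => (φ a) ^ (1 / 2 : ℝ) * W a) a ∂μ
      = ∫⁻ a, φ a * W a ∂μ := by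
    refine lintegral_congr fun a => ?_
    simp only [Pi.mul_apply]
    rw [← mul_assoc, e1]
  have hR1 : ∫⁻ a, ((φ a) ^ (1 / 2 : ℝ)) ^ (2 : ℝ) ∂μ = ∫⁻ a, φ a ∂μ :=
    lintegral_congr fun a => e2 _
  have hR2 : ∫⁻ a, ((φ a) ^ (1 / 2 : ℝ) * W a) ^ (2 : ℝ) ∂μ
      = ∫⁻ a, φ a * (W a) ^ 2 ∂μ := by
    refine lintegral_congr fun a => ?_
    rw [ENNReal.mul_rpow_of_nonneg _ _ (by norm_num : (0:ℝ) ≤ 2), e2]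
    congr 1
    rw [← ENNReal.rpow_natCast (W a) 2]
    norm_num
  rw [hL, hR1, hR2] at h
  calc (∫⁻ a, φ a * W a ∂μ) ^ 2
      ≤ ((∫⁻ a, φ a ∂μ) ^ (1 / 2 : ℝ) * (∫⁻ a, φ a * (W a) ^ 2 ∂μ) ^ (1 / 2 : ℝ)) ^ 2 := by
        gcongr
    _ = (∫⁻ a, φ a ∂μ) * (∫⁻ a, φ a * (W a) ^ 2 ∂μ) := by
        rw [mul_pow]
        congr 1 <;>
          (rw [← ENNReal.rpow_natCast (_ ^ (1/2:ℝ)) 2, ← ENNReal.rpow_mul]; norm_num)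

lemma aux_integrable_sq_gaussian (v : ℝ≥0) :
    Integrable (fun x : ℝ => x ^ 2) (gaussianReal 0 v) := by
  by_cases hv : v = 0
  · subst hv
    rw [gaussianReal_zero_var]
    refine ⟨(measurable_id.pow_const 2).aestronglyMeasurable, ?_⟩
    rw [HasFiniteIntegral, lintegral_dirac]
    exact ENNReal.coe_lt_top
  · rw [gaussianReal_of_var_ne_zero _ hv]
    rw [integrable_withDensity_iff (measurable_gaussianPDF _ _)
      (ae_of_all _ fun x => ENNReal.ofReal_lt_top)]
    have hv' : (0:ℝ) < v := NNReal.coe_pos.mpr (pos_iff_ne_zero.mpr hv)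
    have hb : 0 < (1 : ℝ) / (2 * v) := by positivity
    have h1 : Integrable (fun x : ℝ => x ^ (2:ℝ) * Real.exp (-(1 / (2 * v)) * x ^ 2)) volume :=
      integrable_rpow_mul_exp_neg_mul_sq hb (by norm_num)
    have h2 := h1.const_mul (Real.sqrt (2 * Real.pi * v))⁻¹
    refine h2.congr (ae_of_all _ fun x => ?_)
    simp only [gaussianPDF]
    rw [ENNReal.toReal_ofReal (gaussianPDFReal_nonneg _ _ _), gaussianPDFReal]
    rw [show -(x - 0) ^ 2 / (2 * (v:ℝ)) = -(1 / (2 * (v:ℝ))) * x ^ 2 from by ring,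
      show (2:ℝ) = ((2:ℕ):ℝ) from by norm_num, Real.rpow_natCast]
    ring


lemma aux_sq_integral_le {Ω : Type*} [MeasurableSpace Ω] {P : Measure Ω} {g : Ω → ℝ}
    (hg : AEStronglyMeasurable g P) {c : ℝ} (hc : 0 ≤ c)
    (h : ∫⁻ ω, (‖g ω‖₊ : ℝ≥0∞) ^ 2 ∂P ≤ ENNReal.ofReal c) : ∫ ω, g ω ^ 2 ∂P ≤ c := by
  have hid : (fun ω => g ω ^ 2) = fun ω => g ω * g ω := by ext ω; ring
  rw [integral_eq_lintegral_of_nonneg_ae (ae_of_all _ fun ω => sq_nonneg (g ω))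
    (by rw [hid]; exact hg.mul hg)]
  refine ENNReal.toReal_le_of_le_ofReal hc (le_trans (le_of_eq ?_) h)
  exact lintegral_congr fun ω => (aux_ennnorm_sq (g ω)).symm

end Aux

/-- For a centered stationary Gaussian process `X̄` with bounded covariance and a random
variable `ξ` with finite fourth moment, the process `Z_t = ∫₀^t λ e^{−λu} X̄_u du`
satisfies (a) `sup_t E[Z_t²] < ∞`, (b) `E|Z_t − Z_s|² ≤ C|t − s|²`, and
(c) `(1/t) ξ Z_t → 0` almost surely as `t → ∞`. -/
theorem stmt14 {Ω : Type*} [MeasurableSpace Ω] (P : Measure Ω) [IsProbabilityMeasure P]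
    (Xbar : ℝ → Ω → ℝ) (rbar : ℝ → ℝ) (ξ : Ω → ℝ) (lam : ℝ) (hlam : 0 < lam)
    (hmeas : ∀ t, Measurable (Xbar t))
    (hcont : ∀ ω, ContinuousOn (fun t => Xbar t ω) (Set.Ici (0 : ℝ)))
    (hcent : ∀ t, 0 ≤ t → ∫ ω, Xbar t ω ∂P = 0)
    (hgauss : ∀ (n : ℕ) (c : Fin n → ℝ) (ts : Fin n → ℝ), (∀ k, 0 ≤ ts k) →
      ∃ v : NNReal, Measure.map (fun ω => ∑ k, c k * Xbar (ts k) ω) P = gaussianReal 0 v)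
    (hcov : ∀ s t : ℝ, 0 ≤ s → 0 ≤ t → ∫ ω, Xbar s ω * Xbar (s + t) ω ∂P = rbar t)
    (hbdd : ∃ M : ℝ, ∀ t : ℝ, 0 ≤ t → |rbar t| ≤ M)
    (hξmeas : Measurable ξ)
    (hξ4 : Integrable (fun ω => (ξ ω) ^ 4) P) :
    (∃ M : ℝ, ∀ t : ℝ, 0 ≤ t → ∫ ω, (zProc lam Xbar t ω) ^ 2 ∂P ≤ M) ∧
    (∃ C > (0 : ℝ), ∀ s t : ℝ, 0 ≤ s → s ≤ t →
      ∫ ω, (zProc lam Xbar t ω - zProc lam Xbar s ω) ^ 2 ∂P ≤ C * (t - s) ^ 2) ∧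
    (∀ᵐ ω ∂P, Tendsto (fun t : ℝ => ξ ω * zProc lam Xbar t ω / t) atTop (nhds 0)) := by
  classical
  -- Notation
  set F : ℝ → ℝ := fun u => lam * Real.exp (-lam * u) with hFdef
  set Y : ℝ → Ω → ℝ := fun u ω => Xbar (max u 0) ω with hYdef
  set φ : ℝ → ℝ≥0∞ := fun u => ENNReal.ofReal (F u) with hφdef
  have hFcont : Continuous F := by
    rw [hFdef]; exact continuous_const.mul (Real.continuous_exp.comp (continuous_const.mul continuous_id))
  have hFpos : ∀ u, 0 < F u := fun u => mul_pos hlam (Real.exp_pos _)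
  have hYcont : ∀ ω, Continuous fun u => Y u ω := fun ω =>
    (hcont ω).comp_continuous (continuous_id.max continuous_const)
      (fun u => mem_Ici.2 (le_max_right _ _))
  have hYum : Measurable (Function.uncurry Y) :=
    measurable_uncurry_of_continuous_of_measurable hYcont (fun u => hmeas _)
  have hGum : Measurable fun p : ℝ × Ω => F p.1 * Y p.1 p.2 :=
    (hFcont.measurable.comp measurable_fst).mul hYum
  have hφm : Measurable φ := hFcont.measurable.ennreal_ofReal
  -- second moments
  have hXsqInt : ∀ u : ℝ, 0 ≤ u → Integrable (fun ω => Xbar u ω ^ 2) P := by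
    intro u hu
    obtain ⟨v, hv⟩ := hgauss 1 (fun _ => 1) (fun _ => u) (fun _ => hu)
    have hmap : Measure.map (Xbar u) P = gaussianReal 0 v := by
      rw [← hv]; congr 1; funext ω; simp
    have h2 : Integrable ((fun x : ℝ => x ^ 2) ∘ Xbar u) P := by
      rw [← integrable_map_measure
        (by rw [hmap]; exact (measurable_id.pow_const 2).aestronglyMeasurable)
        (hmeas u).aemeasurable, hmap]
      exact aux_integrable_sq_gaussian v
    exact h2
  have hXsqVal : ∀ u : ℝ, 0 ≤ u → ∫ ω, Xbar u ω ^ 2 ∂P = rbar 0 := by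
    intro u hu
    have h := hcov u 0 hu le_rfl
    rw [add_zero] at h
    rw [← h]
    exact integral_congr_ae (ae_of_all _ fun ω => by ring)
  have hr0 : 0 ≤ rbar 0 := by
    rw [← hXsqVal 0 le_rfl]; exact integral_nonneg fun ω => sq_nonneg _
  have hL2 : ∀ u : ℝ, 0 ≤ u → ∫⁻ ω, (‖Xbar u ω‖₊ : ℝ≥0∞) ^ 2 ∂P = ENNReal.ofReal (rbar 0) := by
    intro u hu
    rw [← hXsqVal u hu, ofReal_integral_eq_lintegral_ofReal (hXsqInt u hu)
      (ae_of_all _ fun ω => sq_nonneg _)]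
    exact lintegral_congr fun ω => aux_ennnorm_sq _
  -- the deterministic integral of F
  have hFTC : ∀ t : ℝ, ∫ u in (0:ℝ)..t, F u = 1 - Real.exp (-lam * t) := by
    intro t
    have hder : ∀ x ∈ uIcc (0:ℝ) t, HasDerivAt (fun u => -Real.exp (-lam * u)) (F x) x := by
      intro x _
      have h1 : HasDerivAt (fun u : ℝ => -lam * u) (-lam) x := by
        simpa using (hasDerivAt_id x).const_mul (-lam)
      have h3 := h1.exp.neg
      refine h3.congr_deriv ?_
      rw [hFdef]; ring
    have hci : IntervalIntegrable F volume 0 t := hFcont.intervalIntegrable _ _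
    rw [intervalIntegral.integral_eq_sub_of_hasDerivAt hder hci]
    simp [Real.exp_zero]
    ring
  have hφIoc : ∀ t : ℝ, 0 ≤ t → ∫⁻ u in Ioc 0 t, φ u ≤ 1 := by
    intro t ht
    rw [hφdef, ← ofReal_integral_eq_lintegral_ofReal hFcont.integrableOn_Ioc
      (ae_of_all _ fun u => (hFpos u).le), ← intervalIntegral.integral_of_le ht, hFTC t]
    have h1 : ENNReal.ofReal (1 - Real.exp (-lam * t)) ≤ ENNReal.ofReal 1 :=
      ENNReal.ofReal_le_ofReal (by nlinarith [Real.exp_pos (-lam * t)])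
    simpa using h1
  have hφIoi : ∫⁻ u in Ioi 0, φ u ≠ ∞ := by
    have hint : IntegrableOn F (Ioi 0) volume := by
      have := (exp_neg_integrableOn_Ioi 0 hlam).const_mul lam
      exact this
    rw [hφdef, ← ofReal_integral_eq_lintegral_ofReal hint
      (ae_of_all _ fun u => (hFpos u).le)]
    exact ENNReal.ofReal_ne_top
  -- rewriting zProc
  have hZY : ∀ t : ℝ, 0 ≤ t → ∀ ω, zProc lam Xbar t ω = ∫ u in Ioc 0 t, F u * Y u ω := by
    intro t ht ω
    rw [zProc, intervalIntegral.integral_of_le ht]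
    refine setIntegral_congr_fun measurableSet_Ioc fun u hu => ?_
    simp only [hFdef, hYdef]
    rw [max_eq_left hu.1.le]
  have hZm : ∀ a b : ℝ, Measurable fun ω => ∫ u in Ioc a b, F u * Y u ω := by
    intro a b
    have h : StronglyMeasurable fun p : Ω × ℝ => F p.2 * Y p.2 p.1 :=
      (hGum.comp measurable_swap).stronglyMeasurable
    exact (MeasureTheory.StronglyMeasurable.integral_prod_right'
      (ν := volume.restrict (Ioc a b)) h).measurable
  have hnn : ∀ u (ω : Ω), (‖F u * Y u ω‖₊ : ℝ≥0∞) = φ u * ‖Y u ω‖₊ := by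
    intro u ω
    rw [nnnorm_mul, ENNReal.coe_mul, ← enorm_eq_nnnorm, Real.enorm_eq_ofReal (hFpos u).le, hφdef]
  have hYeq : ∀ u : ℝ, 0 ≤ u → ∀ ω, Y u ω = Xbar u ω := by
    intro u hu ω
    simp only [hYdef]
    rw [max_eq_left hu]
  -- part (a) : uniform second-moment bound
  have key_a : ∀ t : ℝ, 0 ≤ t → ∀ ω, (‖zProc lam Xbar t ω‖₊ : ℝ≥0∞) ^ 2
      ≤ ∫⁻ u in Ioc 0 t, φ u * ((‖Y u ω‖₊ : ℝ≥0∞)) ^ 2 := by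
    intro t ht ω
    rw [hZY t ht ω]
    have h1 : (‖∫ u in Ioc 0 t, F u * Y u ω‖₊ : ℝ≥0∞)
        ≤ ∫⁻ u in Ioc 0 t, φ u * ‖Y u ω‖₊ := by
      refine le_trans (enorm_integral_le_lintegral_enorm _) (le_of_eq ?_)
      exact lintegral_congr fun u => hnn u ω
    calc (‖∫ u in Ioc 0 t, F u * Y u ω‖₊ : ℝ≥0∞) ^ 2
        ≤ (∫⁻ u in Ioc 0 t, φ u * ‖Y u ω‖₊) ^ 2 := pow_le_pow_left₀ zero_le h1 2
      _ ≤ (∫⁻ u in Ioc 0 t, φ u) * (∫⁻ u in Ioc 0 t, φ u * (‖Y u ω‖₊ : ℝ≥0∞) ^ 2) :=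
          aux_lintegral_cs _ φ (fun u => (‖Y u ω‖₊ : ℝ≥0∞)) hφm
            ((hYcont ω).measurable.nnnorm.coe_nnreal_ennreal)
      _ ≤ 1 * (∫⁻ u in Ioc 0 t, φ u * (‖Y u ω‖₊ : ℝ≥0∞) ^ 2) :=
          mul_le_mul_left (hφIoc t ht) _
      _ = _ := one_mul _
  have hprodmeas : ∀ (n : ℕ), Measurable fun p : Ω × ℝ => φ p.2 * (‖Y p.2 p.1‖₊ : ℝ≥0∞) ^ n :=
    fun n => (hφm.comp measurable_snd).mul
      (((hYum.comp measurable_swap).nnnorm.coe_nnreal_ennreal).pow_const n)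
  have bound_a : ∀ t : ℝ, 0 ≤ t →
      ∫⁻ ω, (‖zProc lam Xbar t ω‖₊ : ℝ≥0∞) ^ 2 ∂P ≤ ENNReal.ofReal (rbar 0) := by
    intro t ht
    have hswap : ∫⁻ ω, ∫⁻ u in Ioc 0 t, φ u * (‖Y u ω‖₊ : ℝ≥0∞) ^ 2 ∂volume ∂P
        = ∫⁻ u in Ioc 0 t, ∫⁻ ω, φ u * (‖Y u ω‖₊ : ℝ≥0∞) ^ 2 ∂P ∂volume :=
      lintegral_lintegral_swap ((hprodmeas 2).aemeasurable)
    calc ∫⁻ ω, (‖zProc lam Xbar t ω‖₊ : ℝ≥0∞) ^ 2 ∂P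
        ≤ ∫⁻ ω, ∫⁻ u in Ioc 0 t, φ u * (‖Y u ω‖₊ : ℝ≥0∞) ^ 2 ∂volume ∂P :=
          lintegral_mono fun ω => key_a t ht ω
      _ = ∫⁻ u in Ioc 0 t, ∫⁻ ω, φ u * (‖Y u ω‖₊ : ℝ≥0∞) ^ 2 ∂P ∂volume := hswap
      _ = ∫⁻ u in Ioc 0 t, φ u * ENNReal.ofReal (rbar 0) ∂volume := by
          refine setLIntegral_congr_fun measurableSet_Ioc (fun u hu => ?_)
          have h2 : ∫⁻ ω, ((‖Y u ω‖₊ : ℝ≥0∞)) ^ 2 ∂P = ENNReal.ofReal (rbar 0) :=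
            calc ∫⁻ ω, ((‖Y u ω‖₊ : ℝ≥0∞)) ^ 2 ∂P
                = ∫⁻ ω, ((‖Xbar u ω‖₊ : ℝ≥0∞)) ^ 2 ∂P :=
                  lintegral_congr fun ω => by rw [hYeq u hu.1.le ω]
              _ = ENNReal.ofReal (rbar 0) := hL2 u hu.1.le
          rw [lintegral_const_mul _ ((hmeas _).nnnorm.coe_nnreal_ennreal.pow_const 2), h2]
      _ = (∫⁻ u in Ioc 0 t, φ u) * ENNReal.ofReal (rbar 0) := lintegral_mul_const _ hφm
      _ ≤ 1 * ENNReal.ofReal (rbar 0) := mul_le_mul_left (hφIoc t ht) _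
      _ = _ := one_mul _
  refine ⟨⟨rbar 0, fun t ht => ?_⟩, ?_, ?_⟩
  · have hAESM : AEStronglyMeasurable (fun ω => zProc lam Xbar t ω) P := by
      have he : (fun ω => zProc lam Xbar t ω) = fun ω => ∫ u in Ioc 0 t, F u * Y u ω :=
        funext fun ω => hZY t ht ω
      rw [he]; exact (hZm 0 t).aestronglyMeasurable
    exact aux_sq_integral_le hAESM hr0 (bound_a t ht)
  -- part (b)
  · refine ⟨lam ^ 2 * rbar 0 + 1, by positivity, fun s t hs hst => ?_⟩
    have ht0 : (0:ℝ) ≤ t := hs.trans hst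
    have hts : (0:ℝ) ≤ t - s := sub_nonneg.mpr hst
    have hD : ∀ ω, zProc lam Xbar t ω - zProc lam Xbar s ω = ∫ u in Ioc s t, F u * Y u ω := by
      intro ω
      have hcg : ContinuousOn (fun u => lam * Real.exp (-lam * u) * Xbar u ω) (Ici 0) :=
        (hFcont.continuousOn).mul (hcont ω)
      have h1 : IntervalIntegrable (fun u => lam * Real.exp (-lam * u) * Xbar u ω) volume 0 s :=
        (hcg.mono (by rw [uIcc_of_le hs]; exact Icc_subset_Ici_self)).intervalIntegrable
      have h2 : IntervalIntegrable (fun u => lam * Real.exp (-lam * u) * Xbar u ω) volume s t :=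
        (hcg.mono (by rw [uIcc_of_le hst]; exact fun x hx => hs.trans hx.1)).intervalIntegrable
      have hadd := intervalIntegral.integral_add_adjacent_intervals h1 h2
      have hzz : zProc lam Xbar t ω - zProc lam Xbar s ω
          = ∫ u in s..t, lam * Real.exp (-lam * u) * Xbar u ω := by
        rw [zProc, zProc, ← hadd]; ring
      rw [hzz, intervalIntegral.integral_of_le hst]
      refine setIntegral_congr_fun measurableSet_Ioc fun u hu => ?_
      simp only [hFdef, hYdef]
      rw [max_eq_left ((hs.trans_lt hu.1).le)]
    have key_b : ∀ ω, (‖∫ u in Ioc s t, F u * Y u ω‖₊ : ℝ≥0∞) ^ 2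
        ≤ ENNReal.ofReal (t - s)
          * ∫⁻ u in Ioc s t, ENNReal.ofReal (lam ^ 2) * (‖Y u ω‖₊ : ℝ≥0∞) ^ 2 := by
      intro ω
      have hWm : Measurable fun u => (‖F u * Y u ω‖₊ : ℝ≥0∞) :=
        ((hFcont.mul (hYcont ω)).measurable.nnnorm).coe_nnreal_ennreal
      have h1 : (‖∫ u in Ioc s t, F u * Y u ω‖₊ : ℝ≥0∞)
          ≤ ∫⁻ u in Ioc s t, (1:ℝ≥0∞) * ‖F u * Y u ω‖₊ := by
        refine le_trans (enorm_integral_le_lintegral_enorm _) (le_of_eq ?_)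
        exact lintegral_congr fun u => (one_mul _).symm
      calc (‖∫ u in Ioc s t, F u * Y u ω‖₊ : ℝ≥0∞) ^ 2
          ≤ (∫⁻ u in Ioc s t, (1:ℝ≥0∞) * ‖F u * Y u ω‖₊) ^ 2 := pow_le_pow_left₀ zero_le h1 2
        _ ≤ (∫⁻ u in Ioc s t, (1:ℝ≥0∞))
            * (∫⁻ u in Ioc s t, (1:ℝ≥0∞) * (‖F u * Y u ω‖₊ : ℝ≥0∞) ^ 2) :=
            aux_lintegral_cs _ _ _ measurable_const hWm
        _ = ENNReal.ofReal (t - s) * (∫⁻ u in Ioc s t, (‖F u * Y u ω‖₊ : ℝ≥0∞) ^ 2) := by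
            rw [setLIntegral_one, Real.volume_Ioc]
            congr 1
            exact lintegral_congr fun u => one_mul _
        _ ≤ ENNReal.ofReal (t - s)
            * ∫⁻ u in Ioc s t, ENNReal.ofReal (lam ^ 2) * (‖Y u ω‖₊ : ℝ≥0∞) ^ 2 := by
            refine mul_le_mul_right (setLIntegral_mono
              (measurable_const.mul ((hYcont ω).measurable.nnnorm.coe_nnreal_ennreal.pow_const 2))
              fun u hu => ?_) _
            have hFu : (‖F u‖₊ : ℝ≥0∞) ^ 2 ≤ ENNReal.ofReal (lam ^ 2) := by
              rw [← enorm_eq_nnnorm, Real.enorm_eq_ofReal (hFpos u).le, ← ENNReal.ofReal_pow (hFpos u).le]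
              refine ENNReal.ofReal_le_ofReal (pow_le_pow_left₀ (hFpos u).le ?_ 2)
              have he1 : Real.exp (-lam * u) ≤ 1 := by
                rw [Real.exp_le_one_iff]
                nlinarith [hs.trans_lt hu.1, hlam]
              have h2 : lam * Real.exp (-lam * u) ≤ lam * 1 :=
                mul_le_mul_of_nonneg_left he1 hlam.le
              simp only [hFdef]
              linarith
            rw [nnnorm_mul, ENNReal.coe_mul, mul_pow]
            exact mul_le_mul_left hFu _
    have hDm2 : Measurable fun p : Ω × ℝ => ENNReal.ofReal (lam ^ 2) * (‖Y p.2 p.1‖₊ : ℝ≥0∞) ^ 2 :=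
      measurable_const.mul (((hYum.comp measurable_swap).nnnorm.coe_nnreal_ennreal).pow_const 2)
    have bound_b : ∫⁻ ω, (‖zProc lam Xbar t ω - zProc lam Xbar s ω‖₊ : ℝ≥0∞) ^ 2 ∂P
        ≤ ENNReal.ofReal (lam ^ 2 * rbar 0 * (t - s) ^ 2) := by
      calc ∫⁻ ω, (‖zProc lam Xbar t ω - zProc lam Xbar s ω‖₊ : ℝ≥0∞) ^ 2 ∂P
          = ∫⁻ ω, (‖∫ u in Ioc s t, F u * Y u ω‖₊ : ℝ≥0∞) ^ 2 ∂P :=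
            lintegral_congr fun ω => by rw [hD ω]
        _ ≤ ∫⁻ ω, ENNReal.ofReal (t - s)
              * ∫⁻ u in Ioc s t, ENNReal.ofReal (lam ^ 2) * (‖Y u ω‖₊ : ℝ≥0∞) ^ 2 ∂volume ∂P :=
            lintegral_mono fun ω => key_b ω
        _ = ENNReal.ofReal (t - s) * ∫⁻ ω, ∫⁻ u in Ioc s t,
              ENNReal.ofReal (lam ^ 2) * (‖Y u ω‖₊ : ℝ≥0∞) ^ 2 ∂volume ∂P :=
            lintegral_const_mul _ (Measurable.lintegral_prod_right'
              (ν := volume.restrict (Ioc s t)) hDm2)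
        _ = ENNReal.ofReal (t - s) * ∫⁻ u in Ioc s t, ∫⁻ ω,
              ENNReal.ofReal (lam ^ 2) * (‖Y u ω‖₊ : ℝ≥0∞) ^ 2 ∂P ∂volume := by
            rw [lintegral_lintegral_swap hDm2.aemeasurable]
        _ = ENNReal.ofReal (t - s) * ∫⁻ u in Ioc s t,
              ENNReal.ofReal (lam ^ 2) * ENNReal.ofReal (rbar 0) ∂volume := by
            congr 1
            refine setLIntegral_congr_fun measurableSet_Ioc (fun u hu => ?_)
            have h2 : ∫⁻ ω, ((‖Y u ω‖₊ : ℝ≥0∞)) ^ 2 ∂P = ENNReal.ofReal (rbar 0) :=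
              calc ∫⁻ ω, ((‖Y u ω‖₊ : ℝ≥0∞)) ^ 2 ∂P
                  = ∫⁻ ω, ((‖Xbar u ω‖₊ : ℝ≥0∞)) ^ 2 ∂P :=
                    lintegral_congr fun ω => by rw [hYeq u ((hs.trans_lt hu.1).le) ω]
                _ = ENNReal.ofReal (rbar 0) := hL2 u ((hs.trans_lt hu.1).le)
            rw [lintegral_const_mul _ ((hmeas _).nnnorm.coe_nnreal_ennreal.pow_const 2), h2]
        _ = ENNReal.ofReal (t - s)
            * (ENNReal.ofReal (lam ^ 2) * ENNReal.ofReal (rbar 0) * ENNReal.ofReal (t - s)) := by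
            rw [setLIntegral_const, Real.volume_Ioc]
        _ = ENNReal.ofReal (lam ^ 2 * rbar 0 * (t - s) ^ 2) := by
            rw [← ENNReal.ofReal_mul (by positivity), ← ENNReal.ofReal_mul (by positivity),
              ← ENNReal.ofReal_mul hts]
            congr 1
            ring
    have hAESM : AEStronglyMeasurable (fun ω => zProc lam Xbar t ω - zProc lam Xbar s ω) P := by
      have he : (fun ω => zProc lam Xbar t ω - zProc lam Xbar s ω)
          = fun ω => ∫ u in Ioc s t, F u * Y u ω := funext fun ω => hD ω
      rw [he]; exact (hZm s t).aestronglyMeasurable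
    have hmain := aux_sq_integral_le hAESM (by positivity) bound_b
    refine hmain.trans ?_
    nlinarith [sq_nonneg (t - s), hr0, sq_nonneg lam]
  -- part (c)
  · have hBprod : Measurable fun p : Ω × ℝ => φ p.2 * (‖Y p.2 p.1‖₊ : ℝ≥0∞) :=
      (hφm.comp measurable_snd).mul ((hYum.comp measurable_swap).nnnorm.coe_nnreal_ennreal)
    have hBm : Measurable fun ω => ∫⁻ u in Ioi 0, φ u * ‖Y u ω‖₊ ∂volume :=
      Measurable.lintegral_prod_right' (ν := volume.restrict (Ioi 0)) hBprod
    have hXabs : ∀ u : ℝ, 0 ≤ u →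
        ∫⁻ ω, (‖Xbar u ω‖₊ : ℝ≥0∞) ∂P ≤ 1 + ENNReal.ofReal (rbar 0) := by
      intro u hu
      have hpt : ∀ x : ℝ≥0∞, x ≤ 1 + x ^ 2 := by
        intro x
        rcases le_total x 1 with h | h
        · exact h.trans le_self_add
        · exact (le_self_pow₀ h two_ne_zero).trans le_add_self
      calc ∫⁻ ω, (‖Xbar u ω‖₊ : ℝ≥0∞) ∂P
          ≤ ∫⁻ ω, (1 + (‖Xbar u ω‖₊ : ℝ≥0∞) ^ 2) ∂P := lintegral_mono fun ω => hpt _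
        _ = 1 + ENNReal.ofReal (rbar 0) := by
            rw [lintegral_add_left measurable_const, lintegral_one, measure_univ, hL2 u hu]
    have hIB : ∫⁻ ω, (∫⁻ u in Ioi 0, φ u * ‖Y u ω‖₊ ∂volume) ∂P
        ≤ (∫⁻ u in Ioi 0, φ u) * (1 + ENNReal.ofReal (rbar 0)) := by
      rw [lintegral_lintegral_swap hBprod.aemeasurable]
      calc ∫⁻ u in Ioi 0, ∫⁻ ω, φ u * ‖Y u ω‖₊ ∂P ∂volume
          = ∫⁻ u in Ioi 0, φ u * ∫⁻ ω, (‖Y u ω‖₊ : ℝ≥0∞) ∂P ∂volume := by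
            refine setLIntegral_congr_fun measurableSet_Ioi (fun u _ => ?_)
            exact lintegral_const_mul _ ((hmeas _).nnnorm.coe_nnreal_ennreal)
        _ ≤ ∫⁻ u in Ioi 0, φ u * (1 + ENNReal.ofReal (rbar 0)) ∂volume := by
            refine setLIntegral_mono (hφm.mul_const _) fun u hu => ?_
            refine mul_le_mul_right ?_ _
            calc ∫⁻ ω, ((‖Y u ω‖₊ : ℝ≥0∞)) ∂P
                = ∫⁻ ω, ((‖Xbar u ω‖₊ : ℝ≥0∞)) ∂P :=
                  lintegral_congr fun ω' => by rw [hYeq u (le_of_lt hu) ω']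
              _ ≤ _ := hXabs u (le_of_lt hu)
        _ = (∫⁻ u in Ioi 0, φ u) * (1 + ENNReal.ofReal (rbar 0)) := lintegral_mul_const _ hφm
    have hBfin : ∀ᵐ ω ∂P, (∫⁻ u in Ioi 0, φ u * ‖Y u ω‖₊ ∂volume) < ∞ := by
      refine ae_lt_top hBm (ne_top_of_le_ne_top ?_ hIB)
      exact ENNReal.mul_ne_top hφIoi (by simp [ENNReal.ofReal_ne_top])
    filter_upwards [hBfin] with ω hB
    have hzb : ∀ t : ℝ, 0 ≤ t →
        ‖zProc lam Xbar t ω‖ ≤ (∫⁻ u in Ioi 0, φ u * ‖Y u ω‖₊ ∂volume).toReal := by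
      intro t ht
      have h1 : (‖zProc lam Xbar t ω‖₊ : ℝ≥0∞) ≤ ∫⁻ u in Ioi 0, φ u * ‖Y u ω‖₊ ∂volume := by
        rw [hZY t ht ω]
        refine le_trans (enorm_integral_le_lintegral_enorm _) ?_
        refine le_trans (le_of_eq (lintegral_congr fun u => hnn u ω)) ?_
        exact lintegral_mono_set Ioc_subset_Ioi_self
      calc ‖zProc lam Xbar t ω‖
          = ((‖zProc lam Xbar t ω‖₊ : ℝ≥0∞)).toReal := by
            simp [ENNReal.coe_toReal, coe_nnnorm]
        _ ≤ _ := ENNReal.toReal_mono hB.ne h1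
    set c : ℝ := |ξ ω| * (∫⁻ u in Ioi 0, φ u * ‖Y u ω‖₊ ∂volume).toReal with hcdef
    have htend : Tendsto (fun t : ℝ => c / t) atTop (nhds 0) :=
      tendsto_const_nhds.div_atTop tendsto_id
    refine squeeze_zero_norm' ?_ htend
    filter_upwards [eventually_ge_atTop (1:ℝ)] with t ht1
    have ht0 : (0:ℝ) < t := lt_of_lt_of_le one_pos ht1
    have heq : ‖ξ ω * zProc lam Xbar t ω / t‖ = |ξ ω| * ‖zProc lam Xbar t ω‖ / t := by
      rw [norm_div, norm_mul, Real.norm_eq_abs, Real.norm_eq_abs, Real.norm_eq_abs,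
        abs_of_pos ht0]
    rw [heq, hcdef]
    gcongr
    exact hzb t ht0.le
end
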